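/- arXiv:2605.09498 — 3 statements merged into one kernel-verified Lean document; each statement's English description precedes it below -/
import Mathlib

section
/- Suppose that, independently for each q = 1,…,Q and d = 1,…,D₀, the frequency ω_{q,d} is drawn from the Gaussian distribution N(μ_q, σ_q²). Then for all x, x' ∈ ℝ, the expected inner product of the spectral features equals a spectral-mixture kernel in the difference τ = x − x': E[⟨φ_S(x), φ_S(x')⟩] = Σ_{q=1}^{Q} w_q · exp(−σ_q²τ²/2) · cos(μ_q·τ). In particular the expected kernel is stationary (it depends only on x − x'). -/
open Real MeasureTheory ProbabilityTheory

/-- The spectral feature map `φ_S : ℝ → ℝ^{2 Q D₀}`, indexed by `(q, d, i)` with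
`i = 0` the cosine coordinate and `i = 1` the sine coordinate of the `(q,d)`-th block:
`√(w_q / D₀) · (cos(ω_{q,d} x − φ_q), sin(ω_{q,d} x − φ_q))`. -/
noncomputable def phiS (Q D0 : ℕ) (w φ : Fin Q → ℝ) (ω : Fin Q → Fin D0 → ℝ) (x : ℝ) :
    Fin Q × Fin D0 × Fin 2 → ℝ :=
  fun qdi =>
    Real.sqrt (w qdi.1 / D0) *
      (if qdi.2.2 = 0 then Real.cos (ω qdi.1 qdi.2.1 * x - φ qdi.1)
       else Real.sin (ω qdi.1 qdi.2.1 * x - φ qdi.1))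

/-!
Expanding the inner product, block `(q, d)` contributes `(w_q / D₀) cos (ω_{q,d} (x - x'))` by the
subtraction formula for the cosine, so the phases cancel. Each summand depends on one coordinate
of the product measure only, and the mean of `cos (ω τ)` under `N(μ, σ²)` is the real part of the
Gaussian characteristic function `exp (i μ τ - σ² τ² / 2)`. The `D₀` identical blocks of each `q`
then absorb the normalisation `1 / D₀`.
-/

open Complex in
lemma integral_cos_mul_eq_re_charFun (μ : Measure ℝ) [IsFiniteMeasure μ] (t : ℝ) :
    ∫ y, Real.cos (y * t) ∂μ = (charFun μ t).re := by
  have hint : Integrable (fun y : ℝ => cexp (t * y * I)) μ :=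
    (integrable_const (1 : ℝ)).mono' (by fun_prop) (.of_forall fun y => by
      rw [← ofReal_mul, norm_exp_ofReal_mul_I])
  rw [charFun_apply_real, ← RCLike.re_to_complex, ← integral_re hint]
  congr 1 with y
  rw [RCLike.re_to_complex, ← ofReal_mul, exp_ofReal_mul_I_re, mul_comm]

lemma integral_cos_gaussianReal (m : ℝ) (v : NNReal) (t : ℝ) :
    ∫ y, Real.cos (y * t) ∂gaussianReal m v = Real.exp (-(v * t ^ 2) / 2) * Real.cos (m * t) := by
  rw [integral_cos_mul_eq_re_charFun, charFun_gaussianReal, Complex.exp_re]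
  congr 2
  · simp [← Complex.ofReal_pow, neg_div]
  · simp [← Complex.ofReal_pow, mul_comm t]

lemma sum_phiS_mul_phiS {Q D0 : ℕ} {w : Fin Q → ℝ} (hw : ∀ q, 0 ≤ w q) (φ : Fin Q → ℝ)
    (ω : Fin Q → Fin D0 → ℝ) (x x' : ℝ) :
    ∑ idx, phiS Q D0 w φ ω x idx * phiS Q D0 w φ ω x' idx =
      ∑ qd : Fin Q × Fin D0, w qd.1 / D0 * Real.cos (ω qd.1 qd.2 * (x - x')) := by
  rw [← Equiv.sum_comp (Equiv.prodAssoc _ _ _), Fintype.sum_prod_type]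
  refine Fintype.sum_congr _ _ fun qd => ?_
  set c := w qd.1 / D0
  have hc : √c * √c = c := Real.mul_self_sqrt (div_nonneg (hw qd.1) D0.cast_nonneg)
  simp only [Fin.sum_univ_two, phiS, Equiv.prodAssoc_apply, one_ne_zero, ↓reduceIte]
  rw [show ω qd.1 qd.2 * (x - x') = (ω qd.1 qd.2 * x - φ qd.1) - (ω qd.1 qd.2 * x' - φ qd.1) by
    ring]
  generalize ω qd.1 qd.2 * x - φ qd.1 = a, ω qd.1 qd.2 * x' - φ qd.1 = b
  rw [Real.cos_sub]
  linear_combination (Real.cos a * Real.cos b + Real.sin a * Real.sin b) * hc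

lemma integral_pi_sum_mul_cos {ι : Type*} [Fintype ι] (ν : ι → Measure ℝ)
    [∀ i, IsProbabilityMeasure (ν i)] (c : ι → ℝ) (t : ℝ) :
    ∫ ω, ∑ i, c i * Real.cos (ω i * t) ∂Measure.pi ν = ∑ i, c i * ∫ y, Real.cos (y * t) ∂ν i := by
  have hcos : ∀ i, Integrable (fun y => Real.cos (y * t)) (ν i) := fun i =>
    .of_bound (by fun_prop) 1 (.of_forall fun y => by simpa using Real.abs_cos_le_one _)
  rw [integral_finsetSum _ fun i _ =>
    (integrable_comp_eval (X := fun _ => ℝ) (hcos i)).const_mul _]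
  simp only [integral_const_mul]
  congr! 2 with i
  exact integral_comp_eval (X := fun _ => ℝ) (hcos i).aestronglyMeasurable

theorem expected_spectral_kernel_is_spectral_mixture_general
    (Q D0 : ℕ) (hD0 : 1 ≤ D0)
    (w φ μ σ : Fin Q → ℝ) (hw : ∀ q, 0 ≤ w q)
    (x x' : ℝ) :
    ∫ ωs : Fin Q × Fin D0 → ℝ,
        (∑ idx : Fin Q × Fin D0 × Fin 2,
          phiS Q D0 w φ (fun q d => ωs (q, d)) x idx *
            phiS Q D0 w φ (fun q d => ωs (q, d)) x' idx)
      ∂(Measure.pi fun qd : Fin Q × Fin D0 =>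
          gaussianReal (μ qd.1) ⟨(σ qd.1) ^ 2, sq_nonneg _⟩) =
    ∑ q : Fin Q,
      w q * Real.exp (-((σ q) ^ 2 * (x - x') ^ 2) / 2) * Real.cos (μ q * (x - x')) := by
  -- `⟨σ q ^ 2, _⟩` elaborates at type `{r // 0 ≤ r}`, hiding `gaussianReal`'s instances and
  -- lemmas (stated for `ℝ≥0`) from instance search and `simp`.
  have (qd : Fin Q × Fin D0) :
      IsProbabilityMeasure (gaussianReal (μ qd.1) ⟨σ qd.1 ^ 2, sq_nonneg _⟩) :=
    instIsProbabilityMeasureGaussianReal _ _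
  have hgauss (q : Fin Q) :
      ∫ y, Real.cos (y * (x - x')) ∂gaussianReal (μ q) ⟨σ q ^ 2, sq_nonneg _⟩ =
        Real.exp (-(σ q ^ 2 * (x - x') ^ 2) / 2) * Real.cos (μ q * (x - x')) :=
    integral_cos_gaussianReal _ _ _
  simp only [sum_phiS_mul_phiS hw, Prod.mk.eta]
  rw [integral_pi_sum_mul_cos]
  simp only [hgauss, Fintype.sum_prod_type, Finset.sum_const, Finset.card_univ, Fintype.card_fin,
    nsmul_eq_mul]
  have hD0ℝ : (D0 : ℝ) ≠ 0 := Nat.cast_ne_zero.mpr (by omega)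
  refine Fintype.sum_congr _ _ fun q => ?_
  field_simp

/-- If the frequencies `ω_{q,d}` are drawn independently with `ω_{q,d} ~ N(μ_q, σ_q²)`
(so their joint law is the product of these Gaussian measures), then the expected inner
product of the spectral features is the spectral-mixture kernel
`Σ_q w_q exp(−σ_q² τ² / 2) cos(μ_q τ)` with `τ = x − x'`; in particular it is stationary. -/
theorem expected_spectral_kernel_is_spectral_mixture
    (Q D0 : ℕ) (hQ : 1 ≤ Q) (hD0 : 1 ≤ D0)
    (w φ μ σ : Fin Q → ℝ) (hw : ∀ q, 0 ≤ w q) (hσ : ∀ q, 0 ≤ σ q)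
    (x x' : ℝ) :
    ∫ ωs : Fin Q × Fin D0 → ℝ,
        (∑ idx : Fin Q × Fin D0 × Fin 2,
          phiS Q D0 w φ (fun q d => ωs (q, d)) x idx *
            phiS Q D0 w φ (fun q d => ωs (q, d)) x' idx)
      ∂(Measure.pi fun qd : Fin Q × Fin D0 =>
          gaussianReal (μ qd.1) ⟨(σ qd.1) ^ 2, sq_nonneg _⟩) =
    ∑ q : Fin Q,
      w q * Real.exp (-((σ q) ^ 2 * (x - x') ^ 2) / 2) * Real.cos (μ q * (x - x')) :=
  expected_spectral_kernel_is_spectral_mixture_general Q D0 hD0 w φ μ σ hw x x'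
end

section
/- The spectral-mixture kernel is positive semidefinite: let Q ≥ 1, w_q ≥ 0, μ_q ∈ ℝ and σ_q ≥ 0 for q = 1,…,Q, and define k : ℝ → ℝ by k(τ) = Σ_{q=1}^{Q} w_q·exp(−σ_q²τ²/2)·cos(μ_q·τ). Then for every n ≥ 1, all points x₁,…,x_n ∈ ℝ and all coefficients c₁,…,c_n ∈ ℝ, it holds that Σ_{i=1}^{n} Σ_{j=1}^{n} c_i·c_j·k(x_i − x_j) ≥ 0. -/
/-!
If `ω ~ N(μ, σ²)`, then `E[cos(τω)] = exp(−σ²τ²/2) cos(μτ)` (the real part of the Gaussian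
characteristic function), so each component of the mixture is an average of the kernels
`τ ↦ cos(τω)`. These are positive semidefinite because
`Σᵢⱼ cᵢcⱼ cos((xᵢ − xⱼ)ω) = (Σᵢ cᵢ cos(xᵢω))² + (Σᵢ cᵢ sin(xᵢω))²`,
and positive semidefiniteness survives averaging, nonnegative scaling and finite sums.
-/

open Real MeasureTheory ProbabilityTheory Finset
open scoped NNReal

def IsPosSemidefKernel (k : ℝ → ℝ) : Prop :=
  ∀ (n : ℕ) (x c : Fin n → ℝ), 0 ≤ ∑ i, ∑ j, c i * c j * k (x i - x j)

namespace IsPosSemidefKernel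

theorem const_mul {k : ℝ → ℝ} (hk : IsPosSemidefKernel k) {a : ℝ} (ha : 0 ≤ a) :
    IsPosSemidefKernel fun τ => a * k τ := by
  intro n x c
  have hfactor : ∑ i, ∑ j, c i * c j * (a * k (x i - x j)) =
      a * ∑ i, ∑ j, c i * c j * k (x i - x j) := by
    simp only [mul_sum, mul_left_comm a]
  rw [hfactor]
  exact mul_nonneg ha (hk n x c)

theorem sum {ι : Type*} {s : Finset ι} {k : ι → ℝ → ℝ}
    (hk : ∀ q ∈ s, IsPosSemidefKernel (k q)) :
    IsPosSemidefKernel fun τ => ∑ q ∈ s, k q τ := by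
  intro n x c
  have hswap : ∑ i, ∑ j, c i * c j * ∑ q ∈ s, k q (x i - x j) =
      ∑ q ∈ s, ∑ i, ∑ j, c i * c j * k q (x i - x j) := by
    simp only [mul_sum]
    exact (sum_congr rfl fun i _ => sum_comm).trans sum_comm
  rw [hswap]
  exact sum_nonneg fun q hq => hk q hq n x c

end IsPosSemidefKernel

theorem sum_sum_mul_mul_cos_sub {ι : Type*} [Fintype ι] (x c : ι → ℝ) :
    ∑ i, ∑ j, c i * c j * cos (x i - x j) =
      (∑ i, c i * cos (x i)) ^ 2 + (∑ i, c i * sin (x i)) ^ 2 := by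
  simp only [sq, sum_mul_sum, ← sum_add_distrib, cos_sub]
  exact sum_congr rfl fun i _ => sum_congr rfl fun j _ => by ring

theorem isPosSemidefKernel_integral_cos (ν : Measure ℝ) [IsFiniteMeasure ν] :
    IsPosSemidefKernel fun τ => ∫ ω, cos (τ * ω) ∂ν := by
  intro n x c
  have hint : ∀ τ : ℝ, Integrable (fun ω => cos (τ * ω)) ν := fun τ =>
    Integrable.of_bound (by fun_prop) 1 (ae_of_all _ fun ω => abs_cos_le_one _)
  have hswap : ∑ i, ∑ j, c i * c j * ∫ ω, cos ((x i - x j) * ω) ∂ν =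
      ∫ ω, ∑ i, ∑ j, c i * c j * cos ((x i - x j) * ω) ∂ν := by
    rw [integral_finsetSum _ fun i _ => integrable_finsetSum _ fun j _ => (hint _).const_mul _]
    refine sum_congr rfl fun i _ => ?_
    rw [integral_finsetSum _ fun j _ => (hint _).const_mul _]
    simp_rw [integral_const_mul]
  rw [hswap]
  refine integral_nonneg fun ω => ?_
  simp only [sub_mul, sum_sum_mul_mul_cos_sub (fun i => x i * ω)]
  positivity

theorem integral_cos_mul_gaussianReal (μ : ℝ) (v : ℝ≥0) (τ : ℝ) :
    ∫ ω, cos (τ * ω) ∂gaussianReal μ v = exp (-(v * τ ^ 2) / 2) * cos (μ * τ) := by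
  have hint : Integrable (fun ω : ℝ => Complex.exp (τ * ω * Complex.I)) (gaussianReal μ v) :=
    Integrable.of_bound (by fun_prop) 1 (ae_of_all _ fun ω => by
      rw [← Complex.ofReal_mul, Complex.norm_exp_ofReal_mul_I])
  have h := Complex.reCLM.integral_comp_comm hint
  rw [← charFun_apply_real, charFun_gaussianReal] at h
  simpa [Complex.exp_re, ← Complex.ofReal_pow, neg_div, mul_comm τ] using h

theorem spectral_mixture_kernel_posSemidef_general
    (Q : ℕ) (w μ σ : Fin Q → ℝ) (hw : ∀ q, 0 ≤ w q)
    (n : ℕ) (x c : Fin n → ℝ) :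
    0 ≤ ∑ i : Fin n, ∑ j : Fin n, c i * c j *
        (∑ q : Fin Q,
          w q * Real.exp (-((σ q) ^ 2 * (x i - x j) ^ 2) / 2) *
            Real.cos (μ q * (x i - x j))) := by
  have hk : IsPosSemidefKernel fun τ =>
      ∑ q, w q * exp (-(σ q ^ 2 * τ ^ 2) / 2) * cos (μ q * τ) := by
    refine IsPosSemidefKernel.sum fun q _ => ?_
    have hgauss : (fun τ => w q * exp (-(σ q ^ 2 * τ ^ 2) / 2) * cos (μ q * τ)) =
        fun τ => w q * ∫ ω, cos (τ * ω) ∂gaussianReal (μ q) (σ q ^ 2).toNNReal := by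
      funext τ
      rw [integral_cos_mul_gaussianReal, Real.coe_toNNReal _ (sq_nonneg _), mul_assoc]
    rw [hgauss]
    exact (isPosSemidefKernel_integral_cos _).const_mul (hw q)
  exact hk n x c

/-- The spectral-mixture kernel `k(τ) = Σ_q w_q exp(−σ_q² τ² / 2) cos(μ_q τ)` is positive
semidefinite: all quadratic forms `Σ_i Σ_j c_i c_j k(x_i − x_j)` are nonnegative. -/
theorem spectral_mixture_kernel_posSemidef
    (Q : ℕ) (hQ : 1 ≤ Q) (w μ σ : Fin Q → ℝ) (hw : ∀ q, 0 ≤ w q) (hσ : ∀ q, 0 ≤ σ q)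
    (n : ℕ) (hn : 1 ≤ n) (x c : Fin n → ℝ) :
    0 ≤ ∑ i : Fin n, ∑ j : Fin n, c i * c j *
        (∑ q : Fin Q,
          w q * Real.exp (-((σ q) ^ 2 * (x i - x j) ^ 2) / 2) *
            Real.cos (μ q * (x i - x j))) :=
  spectral_mixture_kernel_posSemidef_general Q w μ σ hw n x c
end

section
/- Random-sampling coverage bound: let a < b be reals with D = b − a, let p > 0 and let N ≥ 1 be an integer, and set J = ⌈4DN/p⌉. Let X₁,…,X_m be independent random variables, each uniformly distributed on [a, b], and let G_m be the maximum gap of {X₁,…,X_m} in [a, b] (including the boundary gaps X₍₁₎ − a and b − X₍ₘ₎). Then P(G_m > p/(2N)) ≤ J·exp(−m/J). -/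
/-!
Cut `[a, b]` into `J` cells of width `δ = (b - a) / J`. A gap of length at least `2δ` contains a
whole cell, and `J ≥ 4(b - a)N/p` gives `2δ ≤ p/(2N)`, so a gap longer than `p/(2N)` leaves
some cell empty. A fixed cell has probability `1/J`, hence all `m` independent samples miss it
with probability `(1 - 1/J)^m ≤ exp(-m/J)`, and a union bound over the `J` cells concludes.
-/

open MeasureTheory ProbabilityTheory

/-- The maximum gap of a set of points `S` in the interval `[a, b]`: the largest `l` such that
some open subinterval of `[a, b]` of length `l` contains no point of `S`. For a finite set of
points `x₍₁₎ ≤ ⋯ ≤ x₍ₘ₎` in `[a, b]` this equals the largest of the consecutive differences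
`x₍ᵢ₊₁₎ − x₍ᵢ₎` together with the boundary gaps `x₍₁₎ − a` and `b − x₍ₘ₎`. -/
noncomputable def maxGap (a b : ℝ) (S : Set ℝ) : ℝ :=
  sSup {l : ℝ | ∃ c, a ≤ c ∧ c + l ≤ b ∧ ∀ x ∈ S, x ∉ Set.Ioo c (c + l)}

open Set

theorem exists_empty_Ioo_of_lt_maxGap {a b t : ℝ} (hab : a ≤ b) {S : Set ℝ}
    (h : t < maxGap a b S) :
    ∃ c l, t < l ∧ a ≤ c ∧ c + l ≤ b ∧ ∀ x ∈ S, x ∉ Ioo c (c + l) := by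
  have hne : {l : ℝ | ∃ c, a ≤ c ∧ c + l ≤ b ∧ ∀ x ∈ S, x ∉ Ioo c (c + l)}.Nonempty :=
    ⟨0, a, le_rfl, by linarith, fun x _ => by simp⟩
  obtain ⟨l, ⟨c, hac, hcb, hS⟩, htl⟩ := exists_lt_of_lt_csSup hne h
  exact ⟨c, l, htl, hac, hcb, hS⟩

def gridCell (a δ : ℝ) (k : ℕ) : Set ℝ :=
  Ioo (a + k * δ) (a + (k + 1) * δ)

theorem exists_gridCell_within {a δ c l : ℝ} (hδ : 0 < δ) (hac : a ≤ c) (hl : 2 * δ ≤ l) :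
    ∃ k : ℕ, c ≤ a + k * δ ∧ a + (k + 1) * δ ≤ c + l := by
  have hca : 0 ≤ (c - a) / δ := div_nonneg (by linarith) hδ.le
  refine ⟨⌈(c - a) / δ⌉₊, ?_, ?_⟩
  · have := (div_le_iff₀ hδ).mp (Nat.le_ceil ((c - a) / δ))
    linarith
  · have := (lt_div_iff₀ hδ).mp (sub_lt_iff_lt_add.mpr (Nat.ceil_lt_add_one hca))
    linarith

theorem exists_empty_gridCell_of_lt_maxGap {a b t : ℝ} (hab : a < b) {J : ℕ}
    (hJ : 0 < J) (ht : 2 * ((b - a) / J) ≤ t) {S : Set ℝ} (h : t < maxGap a b S) :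
    ∃ k < J, ∀ x ∈ S, x ∉ gridCell a ((b - a) / J) k := by
  have hJ' : (0 : ℝ) < J := by exact_mod_cast hJ
  have hδ : 0 < (b - a) / J := div_pos (by linarith) hJ'
  obtain ⟨c, l, htl, hac, hcb, hS⟩ := exists_empty_Ioo_of_lt_maxGap hab.le h
  obtain ⟨k, hck, hkl⟩ := exists_gridCell_within hδ hac (ht.trans htl.le)
  have hJδ : (J : ℝ) * ((b - a) / J) = b - a := mul_div_cancel₀ _ hJ'.ne'
  have hkJ : (k : ℝ) + 1 ≤ J := le_of_mul_le_mul_right (by linarith) hδ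
  refine ⟨k, by exact_mod_cast (by linarith : (k : ℝ) < J), fun x hx hxk => hS x hx ?_⟩
  exact ⟨hck.trans_lt hxk.1, hxk.2.trans_le hkl⟩

theorem two_mul_div_ceil_le {D p : ℝ} (hD : 0 < D) (hp : 0 < p) {N : ℕ} (hN : 0 < N) :
    2 * (D / ⌈4 * D * N / p⌉₊) ≤ p / (2 * N) := by
  have hN' : (0 : ℝ) < N := by exact_mod_cast hN
  have hJ : (0 : ℝ) < ⌈4 * D * N / p⌉₊ := by
    exact_mod_cast Nat.ceil_pos.mpr (by positivity)
  have := (div_le_iff₀ hp).mp (Nat.le_ceil (4 * D * N / p))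
  rw [← mul_div_assoc, div_le_div_iff₀ hJ (by positivity)]
  nlinarith

theorem measure_preimage_Ioo_of_map_eq_uniform {Ω : Type*} [MeasurableSpace Ω]
    {P : Measure Ω} {a b c d : ℝ} (hab : a < b) {Y : Ω → ℝ} (hY : Measurable Y)
    (hunif : Measure.map Y P = (ENNReal.ofReal (b - a))⁻¹ • volume.restrict (Icc a b))
    (hac : a ≤ c) (hdb : d ≤ b) :
    P (Y ⁻¹' Ioo c d) = ENNReal.ofReal ((d - c) / (b - a)) := by
  rw [← Measure.map_apply hY measurableSet_Ioo, hunif, Measure.smul_apply, smul_eq_mul,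
    Measure.restrict_apply measurableSet_Ioo,
    inter_eq_left.mpr (Ioo_subset_Icc_self.trans (Icc_subset_Icc hac hdb)), Real.volume_Ioo,
    ENNReal.ofReal_div_of_pos (by linarith), ENNReal.div_eq_inv_mul]

theorem measure_preimage_gridCell_of_map_eq_uniform {Ω : Type*} [MeasurableSpace Ω]
    {P : Measure Ω} {a b : ℝ} (hab : a < b) {Y : Ω → ℝ} (hY : Measurable Y)
    (hunif : Measure.map Y P = (ENNReal.ofReal (b - a))⁻¹ • volume.restrict (Icc a b))
    {J k : ℕ} (hk : k < J) :
    P (Y ⁻¹' gridCell a ((b - a) / J) k) = ENNReal.ofReal (J : ℝ)⁻¹ := by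
  have hJ : (0 : ℝ) < J := by exact_mod_cast (k.zero_le.trans_lt hk)
  have hkJ : (k : ℝ) + 1 ≤ J := by exact_mod_cast hk
  have hJδ : (J : ℝ) * ((b - a) / J) = b - a := mul_div_cancel₀ _ hJ.ne'
  have hδ : 0 < (b - a) / J := div_pos (by linarith) hJ
  rw [gridCell, measure_preimage_Ioo_of_map_eq_uniform hab hY hunif
    (le_add_of_nonneg_right (by positivity)) (by nlinarith)]
  rw [show a + (k + 1) * ((b - a) / J) - (a + k * ((b - a) / J)) = (b - a) / J by ring,
    div_div_cancel_left' (sub_pos.mpr hab).ne']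

theorem measure_iInter_preimage_compl_le_exp {Ω ι β : Type*} [MeasurableSpace Ω]
    [MeasurableSpace β] [Fintype ι] {P : Measure Ω} [IsProbabilityMeasure P]
    {X : ι → Ω → β} (hX : ∀ i, Measurable (X i)) (hindep : iIndepFun X P)
    {C : Set β} (hC : MeasurableSet C) {q : ℝ} (hq0 : 0 ≤ q)
    (hq : ∀ i, ENNReal.ofReal q ≤ P (X i ⁻¹' C)) :
    P (⋂ i, X i ⁻¹' Cᶜ) ≤ ENNReal.ofReal (Real.exp (-(Fintype.card ι * q))) := by
  have hmiss : ∀ i, P (X i ⁻¹' Cᶜ) ≤ ENNReal.ofReal (Real.exp (-q)) := fun i =>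
    calc P (X i ⁻¹' Cᶜ) = 1 - P (X i ⁻¹' C) := prob_compl_eq_one_sub (hX i hC)
      _ ≤ 1 - ENNReal.ofReal q := tsub_le_tsub_left (hq i) 1
      _ ≤ ENNReal.ofReal (Real.exp (-q)) := by
        rw [tsub_le_iff_right, ← ENNReal.ofReal_add (Real.exp_pos _).le hq0]
        exact ENNReal.one_le_ofReal.mpr (by linarith [Real.add_one_le_exp (-q)])
  calc P (⋂ i, X i ⁻¹' Cᶜ) = ∏ i, P (X i ⁻¹' Cᶜ) := by
        simpa using hindep.measure_inter_preimage_eq_mul Finset.univ fun _ _ => hC.compl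
    _ ≤ ∏ _i : ι, ENNReal.ofReal (Real.exp (-q)) := Finset.prod_le_prod' fun i _ => hmiss i
    _ = ENNReal.ofReal (Real.exp (-(Fintype.card ι * q))) := by
        rw [Finset.prod_const, Finset.card_univ, ← ENNReal.ofReal_pow (Real.exp_pos _).le,
          ← Real.exp_nat_mul, mul_neg]

theorem random_sampling_gap_bound_general
    (a b : ℝ) (hab : a < b) (p : ℝ) (hp : 0 < p) (N : ℕ) (hN : 1 ≤ N)
    (m : ℕ)
    (Ω : Type*) [MeasurableSpace Ω] (P : Measure Ω) [IsProbabilityMeasure P]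
    (X : Fin m → Ω → ℝ) (hmeas : ∀ i, Measurable (X i))
    (hindep : iIndepFun X P)
    (hunif : ∀ i, Measure.map (X i) P =
      (ENNReal.ofReal (b - a))⁻¹ • volume.restrict (Set.Icc a b)) :
    P {ω | p / (2 * (N : ℝ)) < maxGap a b (Set.range fun i => X i ω)} ≤
      ENNReal.ofReal
        ((⌈4 * (b - a) * (N : ℝ) / p⌉₊ : ℝ) *
          Real.exp (-(m : ℝ) / (⌈4 * (b - a) * (N : ℝ) / p⌉₊ : ℝ))) := by
  set J : ℕ := ⌈4 * (b - a) * (N : ℝ) / p⌉₊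
  have hJ : 0 < J := Nat.ceil_pos.mpr (by have := sub_pos.mpr hab; positivity)
  have hcell : ∀ k < J, P (⋂ i, X i ⁻¹' (gridCell a ((b - a) / J) k)ᶜ) ≤
      ENNReal.ofReal (Real.exp (-(m : ℝ) / J)) := fun k hk => by
    convert measure_iInter_preimage_compl_le_exp hmeas hindep (C := gridCell a _ k)
      measurableSet_Ioo (by positivity)
      fun i => (measure_preimage_gridCell_of_map_eq_uniform hab (hmeas i) (hunif i) hk).ge
      using 3
    rw [Fintype.card_fin, div_eq_mul_inv, neg_mul]
  have hcover : {ω | p / (2 * (N : ℝ)) < maxGap a b (Set.range fun i => X i ω)} ⊆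
      ⋃ k : Fin J, ⋂ i, X i ⁻¹' (gridCell a ((b - a) / J) k)ᶜ := fun ω hω => by
    obtain ⟨k, hk, hempty⟩ := exists_empty_gridCell_of_lt_maxGap hab hJ
      (two_mul_div_ceil_le (sub_pos.mpr hab) hp hN) hω
    exact mem_iUnion.mpr ⟨⟨k, hk⟩, mem_iInter.mpr fun i => hempty _ (mem_range_self i)⟩
  calc _ ≤ P (⋃ k : Fin J, ⋂ i, X i ⁻¹' (gridCell a ((b - a) / J) k)ᶜ) := measure_mono hcover
    _ ≤ ∑ k : Fin J, P (⋂ i, X i ⁻¹' (gridCell a ((b - a) / J) k)ᶜ) :=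
        measure_iUnion_fintype_le _ _
    _ ≤ ∑ _k : Fin J, ENNReal.ofReal (Real.exp (-(m : ℝ) / J)) :=
        Finset.sum_le_sum fun k _ => hcell k k.isLt
    _ = _ := by
        rw [Finset.sum_const, Finset.card_univ, Fintype.card_fin, nsmul_eq_mul,
          ENNReal.ofReal_mul (Nat.cast_nonneg J), ENNReal.ofReal_natCast]

/-- Random-sampling coverage bound: let `X₁, …, X_m` be i.i.d. uniform on `[a, b]`,
`D = b − a`, `p > 0`, `N ≥ 1`, and `J = ⌈4DN/p⌉`. Then the maximum gap `G_m` of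
`{X₁, …, X_m}` in `[a, b]` (including boundary gaps) satisfies
`P(G_m > p/(2N)) ≤ J · exp(−m/J)`. -/
theorem random_sampling_gap_bound
    (a b : ℝ) (hab : a < b) (p : ℝ) (hp : 0 < p) (N : ℕ) (hN : 1 ≤ N)
    (m : ℕ) (hm : 1 ≤ m)
    (Ω : Type*) [MeasurableSpace Ω] (P : Measure Ω) [IsProbabilityMeasure P]
    (X : Fin m → Ω → ℝ) (hmeas : ∀ i, Measurable (X i))
    (hindep : iIndepFun X P)
    (hunif : ∀ i, Measure.map (X i) P =
      (ENNReal.ofReal (b - a))⁻¹ • volume.restrict (Set.Icc a b)) :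
    P {ω | p / (2 * (N : ℝ)) < maxGap a b (Set.range fun i => X i ω)} ≤
      ENNReal.ofReal
        ((⌈4 * (b - a) * (N : ℝ) / p⌉₊ : ℝ) *
          Real.exp (-(m : ℝ) / (⌈4 * (b - a) * (N : ℝ) / p⌉₊ : ℝ))) :=
  random_sampling_gap_bound_general a b hab p hp N hN m Ω P X hmeas hindep hunif
end
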